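/- arXiv:1608.07270 — 3 statements merged into one kernel-verified Lean document; each statement's English description precedes it below -/
import Mathlib

section
/- Let Ω be a w-regular finite graph, and let A and B be disjoint induced subgraphs of Ω such that every vertex of Ω lies in A or B and |V(A)| ≥ |V(B)|. If B contains an edge, then A must also contain an edge. -/
/-- Lemma 4.7: In a finite `w`-regular graph whose vertex set is partitioned into
`A` and `B` with `|A| ≥ |B|`, if `B` contains an edge then so does `A`. -/
theorem regular_graph_edge_transfer {V : Type*} [Fintype V] [DecidableEq V]
    (G : SimpleGraph V) [DecidableRel G.Adj] (w : ℕ)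
    (hreg : G.IsRegularOfDegree w)
    (A B : Finset V) (hdisj : Disjoint A B) (hunion : A ∪ B = Finset.univ)
    (hcard : B.card ≤ A.card)
    (hB : ∃ x ∈ B, ∃ y ∈ B, G.Adj x y) :
    ∃ x ∈ A, ∃ y ∈ A, G.Adj x y := by
  by_contra hA
  push_neg at hA
  obtain ⟨x, hx, y, hy, hxy⟩ := hB
  -- double counting
  have key : ∑ a ∈ A, (B.filter (G.Adj a)).card
      = ∑ b ∈ B, (A.filter (G.Adj b)).card := by
    simp_rw [Finset.card_filter]
    rw [Finset.sum_comm]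
    apply Finset.sum_congr rfl
    intro b _
    apply Finset.sum_congr rfl
    intro a _
    simp [G.adj_comm]
  -- each a ∈ A has all w neighbors in B
  have hL : ∀ a ∈ A, (B.filter (G.Adj a)).card = w := by
    intro a ha
    have hnb : G.neighborFinset a = B.filter (G.Adj a) := by
      ext v
      simp only [SimpleGraph.mem_neighborFinset, Finset.mem_filter]
      constructor
      · intro hv
        refine ⟨?_, hv⟩
        have : v ∈ A ∪ B := hunion ▸ Finset.mem_univ v
        rcases Finset.mem_union.mp this with hvA | hvB
        · exact absurd hv (hA a ha v hvA)
        · exact hvB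
      · exact fun h => h.2
    rw [← hnb]
    exact hreg a
  -- each b ∈ B has at most w neighbors in A, with x having strictly fewer
  have hle : ∀ b ∈ B, (A.filter (G.Adj b)).card ≤ w := by
    intro b _
    have : A.filter (G.Adj b) ⊆ G.neighborFinset b := by
      intro v hv
      simp only [Finset.mem_filter] at hv
      simp [hv.2]
    calc (A.filter (G.Adj b)).card ≤ (G.neighborFinset b).card :=
          Finset.card_le_card this
      _ = w := hreg b
  have hlt : (A.filter (G.Adj x)).card < w := by
    have hss : A.filter (G.Adj x) ⊂ G.neighborFinset x := by
      constructor
      · intro v hv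
        simp only [Finset.mem_filter] at hv
        simp [hv.2]
      · intro hsub
        have hyN : y ∈ G.neighborFinset x := by simp [hxy]
        have := hsub hyN
        simp only [Finset.mem_filter] at this
        exact (Finset.disjoint_left.mp hdisj this.1) hy
    calc (A.filter (G.Adj x)).card < (G.neighborFinset x).card :=
          Finset.card_lt_card hss
      _ = w := hreg x
  have hsum : ∑ b ∈ B, (A.filter (G.Adj b)).card < ∑ b ∈ B, w :=
    Finset.sum_lt_sum (fun b hb => hle b hb) ⟨x, hx, hlt⟩
  have h1 : w * A.card < w * B.card := by
    calc w * A.card = ∑ a ∈ A, (B.filter (G.Adj a)).card := by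
          rw [Finset.sum_congr rfl hL]; simp [mul_comm]
      _ = ∑ b ∈ B, (A.filter (G.Adj b)).card := key
      _ < ∑ b ∈ B, w := hsum
      _ = w * B.card := by simp [mul_comm]
  exact absurd (Nat.mul_le_mul_left w hcard) (not_le.mpr h1)
end

section
/- Let G be a finite group acting transitively on a finite set C, let S₁ = S ⊆ C. Then for any n ≥ 1 there exist pairwise disjoint subsets S₂, …, S_n ⊆ C with each S_i ⊆ g_iS for some g_i ∈ G, and |S_i| ≥ |S|(1 − (Σ_{j=1}^{i−1}|S_j|)/|C|). -/
open scoped Pointwise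

section Aux

variable {G C : Type*} [Group G] [Fintype G] [DecidableEq G] [Fintype C] [DecidableEq C]
  [MulAction G C] [MulAction.IsPretransitive G C]

private lemma fiber_card (s a : C) :
    (Finset.univ.filter (fun g : G => g • s = a)).card * Fintype.card C = Fintype.card G := by
  obtain ⟨g₀, hg₀⟩ := MulAction.exists_smul_eq G s a
  have h1 : Finset.univ.filter (fun g : G => g • s = a)
      = Finset.univ.image (fun h : MulAction.stabilizer G s => g₀ * (h : G)) := by
    ext g
    simp only [Finset.mem_filter, Finset.mem_univ, true_and, Finset.mem_image]
    constructor
    · intro hg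
      refine ⟨⟨g₀⁻¹ * g, ?_⟩, by group⟩
      simp [MulAction.mem_stabilizer_iff, mul_smul, hg, ← hg₀]
    · rintro ⟨⟨h, hh⟩, rfl⟩
      simp only [mul_smul, MulAction.mem_stabilizer_iff.mp hh, hg₀]
  have hinj : Function.Injective (fun h : MulAction.stabilizer G s => g₀ * (h : G)) := by
    intro x y hxy
    exact Subtype.ext (mul_left_cancel hxy)
  rw [h1, Finset.card_image_of_injective _ hinj, Finset.card_univ]
  have h2 := Subgroup.index_mul_card (MulAction.stabilizer G s)
  rw [MulAction.index_stabilizer_of_transitive] at h2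
  have h3 : Nat.card C = Fintype.card C := Nat.card_eq_fintype_card
  have h4 : Nat.card (MulAction.stabilizer G s) = Fintype.card (MulAction.stabilizer G s) :=
    Nat.card_eq_fintype_card
  have h5 : Nat.card G = Fintype.card G := Nat.card_eq_fintype_card
  rw [h3, h4, h5] at h2
  rw [mul_comm]
  exact h2

private lemma sum_inter_card (S A : Finset C) :
    (∑ g : G, ((g • S) ∩ A).card) * Fintype.card C = S.card * A.card * Fintype.card G := by
  have key : ∀ g : G, ((g • S) ∩ A).card = ∑ s ∈ S, ∑ a ∈ A, if g • s = a then 1 else 0 := by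
    intro g
    have h1 : (g • S) ∩ A = (S.filter (fun s => g • s ∈ A)).image (fun s => g • s) := by
      ext x
      simp only [Finset.mem_inter, Finset.mem_image, Finset.mem_filter, Finset.mem_smul_finset]
      constructor
      · rintro ⟨⟨s, hs, rfl⟩, hx⟩
        exact ⟨s, ⟨hs, hx⟩, rfl⟩
      · rintro ⟨s, ⟨hs, hx⟩, rfl⟩
        exact ⟨⟨s, hs, rfl⟩, hx⟩
    have h2 : Function.Injective (fun s : C => g • s) := MulAction.injective g
    rw [h1, Finset.card_image_of_injective _ h2, Finset.card_filter]
    refine Finset.sum_congr rfl fun s _ => ?_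
    rw [Finset.sum_ite_eq]
  have h0 : ∑ g : G, ((g • S) ∩ A).card
      = ∑ s ∈ S, ∑ a ∈ A, ∑ g : G, if g • s = a then 1 else 0 := by
    calc ∑ g : G, ((g • S) ∩ A).card
        = ∑ g : G, ∑ s ∈ S, ∑ a ∈ A, if g • s = a then 1 else 0 :=
          Finset.sum_congr rfl fun g _ => key g
      _ = ∑ s ∈ S, ∑ g : G, ∑ a ∈ A, if g • s = a then 1 else 0 := Finset.sum_comm
      _ = ∑ s ∈ S, ∑ a ∈ A, ∑ g : G, if g • s = a then 1 else 0 :=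
          Finset.sum_congr rfl fun s _ => Finset.sum_comm
  calc (∑ g : G, ((g • S) ∩ A).card) * Fintype.card C
      = (∑ s ∈ S, ∑ a ∈ A, ∑ g : G, if g • s = a then 1 else 0) * Fintype.card C := by
        rw [h0]
    _ = ∑ s ∈ S, ∑ a ∈ A, (Finset.univ.filter (fun g : G => g • s = a)).card * Fintype.card C := by
        rw [Finset.sum_mul]
        refine Finset.sum_congr rfl fun s _ => ?_
        rw [Finset.sum_mul]
        refine Finset.sum_congr rfl fun a _ => ?_
        rw [Finset.card_filter]
    _ = ∑ s ∈ S, ∑ a ∈ A, Fintype.card G := by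
        refine Finset.sum_congr rfl fun s _ => Finset.sum_congr rfl fun a _ => fiber_card s a
    _ = S.card * A.card * Fintype.card G := by
        simp [Finset.sum_const, mul_assoc]

private lemma exists_good_translate (S A : Finset C) :
    ∃ g : G, (S.card : ℝ) * (1 - (A.card : ℝ) / Fintype.card C) ≤ (((g • S) \ A).card : ℝ) := by
  rcases Nat.eq_zero_or_pos (Fintype.card C) with hC | hC
  · refine ⟨1, ?_⟩
    have : S.card = 0 := by
      have := Finset.card_le_card (Finset.subset_univ S)
      simpa [Finset.card_univ, hC] using this
    simp [this]
  -- averaging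
  have hsum := sum_inter_card (G := G) S A
  have hne : (Finset.univ : Finset G).Nonempty := Finset.univ_nonempty
  have hex : ∃ g ∈ (Finset.univ : Finset G),
      ((g • S) ∩ A).card * Fintype.card C ≤ S.card * A.card := by
    refine Finset.exists_le_of_sum_le hne ?_
    rw [← Finset.sum_mul, hsum, Finset.sum_const, Finset.card_univ, smul_eq_mul, mul_comm]
  obtain ⟨g, -, hg⟩ := hex
  refine ⟨g, ?_⟩
  have hc : (0 : ℝ) < Fintype.card C := by exact_mod_cast hC
  have hinter : (((g • S) ∩ A).card : ℝ) ≤ (S.card : ℝ) * A.card / Fintype.card C := by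
    rw [le_div_iff₀ hc]
    exact_mod_cast hg
  have hcards : (((g • S) ∩ A).card : ℝ) + (((g • S) \ A).card : ℝ) = (S.card : ℝ) := by
    have := Finset.card_inter_add_card_sdiff (g • S) A
    rw [Finset.card_smul_finset] at this
    exact_mod_cast this
  have heq : (S.card : ℝ) * (1 - (A.card : ℝ) / Fintype.card C)
      = (S.card : ℝ) - (S.card : ℝ) * A.card / Fintype.card C := by ring
  linarith

variable (S : Finset C) (g : Finset C → G)

/-- Accumulated union of the constructed sets. -/
private def buildU : ℕ → Finset C
  | 0 => S
  | (k + 1) => buildU k ∪ ((g (buildU k)) • S \ buildU k)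

/-- The constructed sets. -/
private def buildT : ℕ → Finset C
  | 0 => S
  | (k + 1) => (g (buildU S g k)) • S \ buildU S g k

private lemma buildT_subset_buildU : ∀ {j k : ℕ}, j ≤ k → buildT S g j ⊆ buildU S g k := by
  intro j k hjk
  induction k with
  | zero =>
    interval_cases j
    simp [buildT, buildU]
  | succ k ih =>
    rcases Nat.lt_or_ge j (k + 1) with h | h
    · exact (ih (Nat.lt_succ_iff.mp h)).trans (by simp [buildU, Finset.subset_union_left])
    · have : j = k + 1 := le_antisymm hjk h
      subst this
      simp only [buildT, buildU]
      exact Finset.subset_union_right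

private lemma buildT_disjoint : ∀ {j k : ℕ}, j < k → Disjoint (buildT S g j) (buildT S g k) := by
  intro j k hjk
  obtain ⟨m, rfl⟩ : ∃ m, k = m + 1 := ⟨k - 1, by omega⟩
  have h1 : Disjoint (buildU S g m) (buildT S g (m + 1)) := by
    simp only [buildT]
    exact Finset.disjoint_sdiff
  exact Finset.disjoint_of_subset_left (buildT_subset_buildU S g (Nat.lt_succ_iff.mp hjk)) h1

private lemma buildU_card : ∀ k : ℕ, (buildU S g k).card = ∑ j ∈ Finset.range (k + 1), (buildT S g j).card := by
  intro k
  induction k with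
  | zero => simp [buildU, buildT]
  | succ k ih =>
    have hdisj : Disjoint (buildU S g k) ((g (buildU S g k)) • S \ buildU S g k) :=
      Finset.disjoint_sdiff
    rw [show buildU S g (k+1) = buildU S g k ∪ ((g (buildU S g k)) • S \ buildU S g k) from rfl,
      Finset.card_union_of_disjoint hdisj, ih, Finset.sum_range_succ (n := k + 1)]
    rfl

private lemma buildT_translate (k : ℕ) : ∃ h : G, buildT S g k ⊆ h • S := by
  cases k with
  | zero => exact ⟨1, by simp [buildT]⟩
  | succ k =>
    refine ⟨g (buildU S g k), ?_⟩
    show g (buildU S g k) • S \ buildU S g k ⊆ _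
    exact Finset.sdiff_subset

private lemma buildT_bound
    (hg : ∀ A : Finset C,
      (S.card : ℝ) * (1 - (A.card : ℝ) / Fintype.card C) ≤ ((g A • S \ A).card : ℝ)) (k : ℕ) :
    (S.card : ℝ) * (1 - (∑ j ∈ Finset.range k, ((buildT S g j).card : ℝ)) / Fintype.card C)
      ≤ ((buildT S g k).card : ℝ) := by
  cases k with
  | zero => simp [buildT]
  | succ k =>
    have hsum2 : ∑ j ∈ Finset.range (k + 1), ((buildT S g j).card : ℝ)
        = ((buildU S g k).card : ℝ) := by
      rw [buildU_card S g k]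
      push_cast
      rfl
    rw [hsum2]
    exact hg (buildU S g k)

end Aux

/-- Proposition 1.4 (Lemma 7.4 of Cohn–Jiao–Kumar–Torquato): given `S ⊆ C` and a transitive
action of a finite group `G` on `C`, for any `n ≥ 1` there are pairwise disjoint subsets
`S₁ = S, S₂, …, S_n` of `C`, each contained in a translate `g_i S`, with
`|S_i| ≥ |S|(1 − (Σ_{j<i} |S_j|)/|C|)`. -/
theorem exists_disjoint_translates {G C : Type*} [Group G] [Fintype G] [Fintype C]
    [DecidableEq C] [MulAction G C] [MulAction.IsPretransitive G C]
    (S : Finset C) (n : ℕ) (hn : 0 < n) :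
    ∃ T : Fin n → Finset C, T ⟨0, hn⟩ = S ∧ Pairwise (Function.onFun Disjoint T) ∧
      ∀ i, (∃ g : G, T i ⊆ g • S) ∧
        (S.card : ℝ) * (1 - (∑ j ∈ Finset.univ.filter (· < i), ((T j).card : ℝ))
            / Fintype.card C) ≤ (T i).card := by
  classical
  choose g hg using fun A : Finset C => exists_good_translate (G := G) S A
  refine ⟨fun i => buildT S g i.val, rfl, ?_, ?_⟩
  · intro i j hij
    rcases lt_or_gt_of_ne hij with h | h
    · exact buildT_disjoint S g (by exact_mod_cast h)
    · exact (buildT_disjoint S g (by exact_mod_cast h)).symm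
  · intro i
    have hsum : ∑ j ∈ Finset.univ.filter (· < i), ((buildT S g j.val).card : ℝ)
        = ∑ j ∈ Finset.range i.val, ((buildT S g j).card : ℝ) := by
      refine Finset.sum_bij (fun (j : Fin n) _ => (j : ℕ)) ?_ ?_ ?_ ?_
      · intro a ha
        simp only [Finset.mem_filter, Finset.mem_univ, true_and] at ha
        exact Finset.mem_range.mpr ha
      · intro a _ b _ h
        exact Fin.ext h
      · intro b hb
        have hb' := Finset.mem_range.mp hb
        exact ⟨⟨b, lt_trans hb' i.isLt⟩, by
          simp only [Finset.mem_filter, Finset.mem_univ, true_and]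
          exact hb', rfl⟩
      · intros; rfl
    refine ⟨buildT_translate S g i.val, ?_⟩
    rw [hsum]
    exact buildT_bound S g hg i.val
end

section
/- Let G be a finite set, f : G → ℤ taking only even values, with mean E. Define G₋ = {g : f(g) < E}, G₊ = {g : f(g) > E}, and suppose G₊ ≠ ∅ and min_{g∈G₋} f(g) = ⌊E⌋₂ (i.e., every g ∈ G₋ satisfies f(g) = ⌊E⌋₂). Then |G₋| ≥ (|G|/2)(⌈E⌉₂ − E), where ⌈E⌉₂ is the least even integer ≥ E and ⌊E⌋₂ the greatest even integer ≤ E. -/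
open scoped Classical

/-- Lemma 4.9 (abstract form): if `f : G → 2ℤ` has mean `E`, exceeds `E` somewhere, and every
below-average value equals `⌊E⌋₂` (the greatest even integer ≤ E), then the number of
below-average elements is at least `(|G|/2)(⌈E⌉₂ − E)`, where `⌈E⌉₂` is the least even
integer ≥ E. -/
theorem card_below_average_ge {G : Type*} [Fintype G] [Nonempty G] (f : G → ℤ)
    (heven : ∀ g, Even (f g))
    (E : ℝ) (hE : E = (∑ g : G, (f g : ℝ)) / Fintype.card G)
    (hpos : ∃ g₀, E < (f g₀ : ℝ))
    (hmin : ∀ g, (f g : ℝ) < E → (f g : ℝ) = 2 * ⌊E / 2⌋) :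
    (Fintype.card G : ℝ) / 2 * (2 * ⌈E / 2⌉ - E)
      ≤ (Finset.univ.filter fun g => (f g : ℝ) < E).card := by
  classical
  set S := Finset.univ.filter fun g => (f g : ℝ) < E with hSdef
  have hn : (0:ℝ) < Fintype.card G := by
    exact_mod_cast Fintype.card_pos
  by_cases hc : 2 * (⌈E / 2⌉:ℝ) - E ≤ 0
  · have h0 : (0:ℝ) ≤ (S.card : ℝ) := Nat.cast_nonneg _
    nlinarith
  push_neg at hc
  have hfl : (⌈E/2⌉ : ℤ) = ⌊E/2⌋ + 1 := by
    have h1 : ⌈E/2⌉ ≤ ⌊E/2⌋ + 1 := Int.ceil_le_floor_add_one _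
    have h2 : ⌊E/2⌋ < ⌈E/2⌉ := by
      by_contra h
      push_neg at h
      have hfle : (⌊E/2⌋ : ℝ) ≤ E / 2 := Int.floor_le _
      have hcle : (⌈E/2⌉ : ℝ) ≤ (⌊E/2⌋ : ℝ) := by exact_mod_cast h
      linarith
    omega
  have hfl' : (⌈E/2⌉:ℝ) = (⌊E/2⌋:ℝ) + 1 := by exact_mod_cast hfl
  have key : ∀ g ∈ Sᶜ, 2 * (⌈E/2⌉:ℝ) ≤ (f g : ℝ) := by
    intro g hg
    have hge : E ≤ (f g : ℝ) := by
      simp only [hSdef, Finset.mem_compl, Finset.mem_filter, Finset.mem_univ,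
        true_and, not_lt] at hg
      exact hg
    obtain ⟨k, hk⟩ := heven g
    have hk' : (f g : ℝ) = k + k := by exact_mod_cast congrArg (Int.cast : ℤ → ℝ) hk
    have hlek : (⌈E/2⌉ : ℤ) ≤ k := Int.ceil_le.mpr (by rw [hk'] at hge; linarith)
    have : ((⌈E/2⌉ : ℤ) : ℝ) ≤ (k : ℝ) := by exact_mod_cast hlek
    rw [hk']; linarith
  have hsum : (Fintype.card G : ℝ) * E = ∑ g : G, (f g : ℝ) := by
    rw [hE]; field_simp
  have hsplit : ∑ g : G, (f g:ℝ) = ∑ g ∈ S, (f g:ℝ) + ∑ g ∈ Sᶜ, (f g:ℝ) :=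
    (Finset.sum_add_sum_compl S _).symm
  have h1 : ∑ g ∈ S, (f g:ℝ) = (S.card : ℝ) * (2 * ⌊E/2⌋) := by
    rw [Finset.sum_congr rfl (fun g hg => hmin g (by
      simp only [hSdef, Finset.mem_filter, Finset.mem_univ, true_and] at hg; exact hg)),
      Finset.sum_const, nsmul_eq_mul]
  have h2 : (Sᶜ.card : ℝ) * (2 * ⌈E/2⌉) ≤ ∑ g ∈ Sᶜ, (f g:ℝ) := by
    simpa using Finset.card_nsmul_le_sum Sᶜ _ _ key
  have hcard : (Sᶜ.card : ℝ) = (Fintype.card G : ℝ) - (S.card : ℝ) := by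
    have h := Finset.card_compl S
    have hle : S.card ≤ Fintype.card G := Finset.card_le_univ S
    rw [h]; push_cast [hle]; ring
  rw [hcard] at h2
  nlinarith [h2, h1, hsplit, hsum, hfl']
end
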